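/- Suppose a directed RTAS (T, σ_L) uniquely self-assembles the k-colored rectangular pattern P : [w]×[h] → [k], and let x₀, y₀, w′, h′ satisfy x₀ + w′ ≤ w and y₀ + h′ ≤ h with w′, h′ ≥ 1. Then there exists an L-shaped seed σ′ of width w′ and height h′ such that the directed RTAS (T, σ′) uniquely self-assembles the subpattern P′ : [w′]×[h′] → [k] defined by P′(x,y) = P(x₀ + x, y₀ + y). In particular, a tile set that uniquely self-assembles a pattern also uniquely self-assembles (with a suitable seed) every rectangular subpattern of it. -/

import Mathlib

/-!  Rectilinear tile assembly systems (RTAS), following the paper's definitions.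
A tile type is a tuple of four glues (north, west, south, east) and a colour;
glues and colours are natural numbers.  An assembly is a partial function from
`ℤ²` to tile types (modelled with `Option`). -/

structure Tile where
  north : ℕ
  west : ℕ
  south : ℕ
  east : ℕ
  color : ℕ
deriving DecidableEq, Repr

/-- An assembly: a partial function from positions to tile types. -/
abbrev Assembly := ℤ × ℤ → Option Tile

/-- A tile set is directed if no two distinct tile types have both equal west
glues and equal south glues. -/
def DirectedTS (T : Finset Tile) : Prop :=
  ∀ t₁ ∈ T, ∀ t₂ ∈ T, t₁.west = t₂.west → t₁.south = t₂.south → t₁ = t₂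

/-- `t` may attach to `α` at `(x, y)`: the position is untiled, the positions to
the west and to the south are tiled, and the west/south glues of `t` match the
east glue of the western neighbour and the north glue of the southern one. -/
def CanAttach (T : Finset Tile) (α : Assembly) (t : Tile) (x y : ℤ) : Prop :=
  t ∈ T ∧ α (x, y) = none ∧
    (∃ tw, α (x - 1, y) = some tw ∧ t.west = tw.east) ∧
    (∃ ts, α (x, y - 1) = some ts ∧ t.south = ts.north)

/-- The assembly obtained from `α` by placing `t` at `(x, y)`. -/
def Attach (α : Assembly) (t : Tile) (x y : ℤ) : Assembly :=
  fun p => if p = (x, y) then some t else α p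

/-- One attachment step `α →₁ β`. -/
def Step (T : Finset Tile) (α β : Assembly) : Prop :=
  ∃ t x y, CanAttach T α t x y ∧ β = Attach α t x y

/-- A rectilinear tile assembly system: a finite tile set together with an
L-shaped seed of width `w` and height `h`, whose tiles do not belong to the
tile set. -/
structure RTAS where
  T : Finset Tile
  w : ℕ
  h : ℕ
  seed : Assembly
  seed_dom : ∀ p : ℤ × ℤ, (seed p).isSome ↔
      (p = (-1, -1) ∨ (0 ≤ p.1 ∧ p.1 < (w : ℤ) ∧ p.2 = -1) ∨
        (p.1 = -1 ∧ 0 ≤ p.2 ∧ p.2 < (h : ℤ)))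
  seed_disjoint : ∀ p t, seed p = some t → t ∉ T

/-- The set of producible assemblies: the least set containing the seed and
closed under single attachments. -/
inductive Producible (S : RTAS) : Assembly → Prop
  | seed : Producible S S.seed
  | step {α β : Assembly} : Producible S α → Step S.T α β → Producible S β

/-- A terminal assembly: producible, and no tile of the tile set can attach. -/
def Terminal (S : RTAS) (γ : Assembly) : Prop :=
  Producible S γ ∧ ∀ β : Assembly, ¬ Step S.T γ β

/-- `S` uniquely self-assembles the `W × H` rectangular colour pattern `pat`:
some terminal assembly of `S` covers exactly `[W] × [H]` on `ℕ²`, and the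
colour of the tile at each of those positions is the colour prescribed by
`pat`.  (For a directed RTAS the terminal assembly is unique.) -/
def UniquelySelfAssembles (S : RTAS) (W H : ℕ) (pat : ℕ → ℕ → ℕ) : Prop :=
  ∃ γ : Assembly, Terminal S γ ∧
    (∀ x y : ℕ, (γ ((x : ℤ), (y : ℤ))).isSome ↔ (x < W ∧ y < H)) ∧
    (∀ x y : ℕ, ∀ t : Tile, γ ((x : ℤ), (y : ℤ)) = some t → t.color = pat x y)

/-! The tiles of the terminal assembly that lie in the sub-rectangle, shifted to the origin, are
bound to each other by matching glues; along the bottom row and the left column they are bound to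
tiles outside the sub-rectangle, whose relevant glues we copy onto a new L-shaped seed. So the
shifted sub-assembly on top of that seed is a glue-consistent filling of `[w'] × [h']`, and any
such filling is produced row by row and is terminal. -/

def LocallyConsistent (T : Finset Tile) (α : Assembly) : Prop :=
  ∀ x y : ℤ, 0 ≤ x → 0 ≤ y → ∀ t, α (x, y) = some t → t ∈ T ∧
    (∃ tw, α (x - 1, y) = some tw ∧ t.west = tw.east) ∧
    (∃ ts, α (x, y - 1) = some ts ∧ t.south = ts.north)

theorem attach_apply_of_eq_some {α : Assembly} {t s : Tile} {x y : ℤ} {p : ℤ × ℤ}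
    (hxy : α (x, y) = none) (hp : α p = some s) : Attach α t x y p = some s := by
  have hne : p ≠ (x, y) := by rintro rfl; simp_all
  simp only [Attach, if_neg hne, hp]

namespace RTAS

theorem seed_eq_none (S : RTAS) {p : ℤ × ℤ} (hx : 0 ≤ p.1) (hy : 0 ≤ p.2) :
    S.seed p = none := by
  rw [← Option.not_isSome_iff_eq_none, S.seed_dom, Prod.ext_iff]
  omega

theorem bounds_of_seed_isSome (S : RTAS) {x y : ℤ} (h : (S.seed (x, y)).isSome) :
    -1 ≤ x ∧ x < S.w ∧ -1 ≤ y ∧ y < S.h := by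
  rw [S.seed_dom, Prod.ext_iff] at h
  dsimp only at h
  omega

end RTAS

section Producible

variable {S : RTAS} {α : Assembly}

theorem CanAttach.nonneg (hα : ∀ p : ℤ × ℤ, p.1 < 0 ∨ p.2 < 0 → α p = S.seed p)
    {t : Tile} {x y : ℤ} (h : CanAttach S.T α t x y) : 0 ≤ x ∧ 0 ≤ y := by
  obtain ⟨-, -, ⟨tw, hw, -⟩, ⟨ts, hs, -⟩⟩ := h
  constructor
  · by_contra hx
    rw [hα _ (.inl (by dsimp only; omega))] at hw
    have := S.bounds_of_seed_isSome (by rw [hw]; rfl)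
    omega
  · by_contra hy
    rw [hα _ (.inr (by dsimp only; omega))] at hs
    have := S.bounds_of_seed_isSome (by rw [hs]; rfl)
    omega

theorem Producible.eq_seed (h : Producible S α) :
    ∀ p : ℤ × ℤ, p.1 < 0 ∨ p.2 < 0 → α p = S.seed p := by
  induction h with
  | seed => exact fun _ _ => rfl
  | step _ hstep ih =>
    obtain ⟨t, x, y, hcan, rfl⟩ := hstep
    obtain ⟨hx, hy⟩ := hcan.nonneg ih
    intro p hp
    have hne : p ≠ (x, y) := by rintro rfl; dsimp only at hp; omega
    simp only [Attach, if_neg hne, ih p hp]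

theorem Producible.locallyConsistent (h : Producible S α) : LocallyConsistent S.T α := by
  induction h with
  | seed =>
    intro x y hx hy t ht
    simp [S.seed_eq_none (p := (x, y)) hx hy] at ht
  | @step α _ _ hstep ih =>
    obtain ⟨t, x, y, ⟨hT, hnone, ⟨tw, hw, hwg⟩, ⟨ts, hs, hsg⟩⟩, rfl⟩ := hstep
    intro x' y' hx' hy' t' ht'
    by_cases hxy : (x', y') = (x, y)
    · simp only [Attach, if_pos hxy, Option.some.injEq] at ht'
      obtain ⟨rfl, rfl⟩ := Prod.mk.inj hxy
      subst ht'
      exact ⟨hT, ⟨tw, attach_apply_of_eq_some hnone hw, hwg⟩,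
        ⟨ts, attach_apply_of_eq_some hnone hs, hsg⟩⟩
    · simp only [Attach, if_neg hxy] at ht'
      obtain ⟨hT', ⟨tw', hw', hwg'⟩, ⟨ts', hs', hsg'⟩⟩ := ih x' y' hx' hy' t' ht'
      exact ⟨hT', ⟨tw', attach_apply_of_eq_some hnone hw', hwg'⟩,
        ⟨ts', attach_apply_of_eq_some hnone hs', hsg'⟩⟩

end Producible

structure IsFilling (S : RTAS) (β : Assembly) : Prop where
  eq_seed : ∀ p : ℤ × ℤ, p.1 < 0 ∨ p.2 < 0 → β p = S.seed p
  isSome_iff : ∀ x y : ℤ, 0 ≤ x → 0 ≤ y → ((β (x, y)).isSome ↔ x < S.w ∧ y < S.h)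
  consistent : LocallyConsistent S.T β

def partialFill (σ β : Assembly) (W j i : ℕ) : Assembly := fun p =>
  if 0 ≤ p.1 ∧ 0 ≤ p.2 ∧ (p.2 < j ∧ p.1 < W ∨ p.2 = j ∧ p.1 < i) then β p else σ p

section partialFill

variable {σ β : Assembly} {W : ℕ}

theorem partialFill_zero : partialFill σ β W 0 0 = σ := by
  funext p
  simp only [partialFill]
  rw [if_neg (by omega)]

theorem partialFill_row_end (j : ℕ) : partialFill σ β W j W = partialFill σ β W (j + 1) 0 := by
  funext p
  simp only [partialFill]
  exact if_congr (by push_cast; omega) rfl rfl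

theorem partialFill_apply_of_mem {j i : ℕ} {p : ℤ × ℤ}
    (hβ : ∀ p : ℤ × ℤ, p.1 < 0 ∨ p.2 < 0 → β p = σ p)
    (hp : p.1 < 0 ∨ p.2 < 0 ∨ p.2 < j ∧ p.1 < W ∨ p.2 = j ∧ p.1 < i) :
    partialFill σ β W j i p = β p := by
  unfold partialFill
  split_ifs with h
  · rfl
  · exact (hβ p (by omega)).symm

end partialFill

namespace IsFilling

variable {S : RTAS} {β : Assembly}

theorem eq_partialFill (hβ : IsFilling S β) : partialFill S.seed β S.w S.h 0 = β := by
  funext ⟨x, y⟩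
  by_cases hq : x < 0 ∨ y < 0
  · exact partialFill_apply_of_mem hβ.eq_seed (by dsimp only; omega)
  · have hdom := hβ.isSome_iff x y (by omega) (by omega)
    unfold partialFill
    split_ifs with h
    · rfl
    · rw [S.seed_eq_none (p := (x, y)) (by omega) (by omega), eq_comm,
        ← Option.not_isSome_iff_eq_none, hdom]
      omega

theorem step_partialFill (hβ : IsFilling S β) {j i : ℕ} (hj : j < S.h) (hi : i < S.w) :
    Step S.T (partialFill S.seed β S.w j i) (partialFill S.seed β S.w j (i + 1)) := by
  obtain ⟨t, ht⟩ := Option.isSome_iff_exists.mp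
    ((hβ.isSome_iff i j (by omega) (by omega)).mpr (by omega))
  obtain ⟨hT, ⟨tw, hw, hwg⟩, ⟨ts, hs, hsg⟩⟩ := hβ.consistent i j (by omega) (by omega) t ht
  refine ⟨t, i, j, ⟨hT, ?_, ⟨tw, ?_, hwg⟩, ⟨ts, ?_, hsg⟩⟩, ?_⟩
  · simp only [partialFill]
    rw [if_neg (by omega), S.seed_eq_none (by simp) (by simp)]
  · rw [partialFill_apply_of_mem hβ.eq_seed (by dsimp only; omega), hw]
  · rw [partialFill_apply_of_mem hβ.eq_seed (by dsimp only; omega), hs]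
  · funext ⟨x, y⟩
    simp only [partialFill, Attach, Prod.mk.injEq]
    split_ifs with hfill hnew hnew
    any_goals first | rfl | omega
    all_goals obtain ⟨rfl, rfl⟩ := hnew; exact ht

theorem producible_partialFill_row (hβ : IsFilling S β) {j : ℕ} (hj : j < S.h)
    (h₀ : Producible S (partialFill S.seed β S.w j 0)) :
    ∀ i ≤ S.w, Producible S (partialFill S.seed β S.w j i)
  | 0, _ => h₀
  | i + 1, hi => (producible_partialFill_row hβ hj h₀ i (by omega)).step (hβ.step_partialFill hj hi)

theorem producible_partialFill (hβ : IsFilling S β) :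
    ∀ j ≤ S.h, Producible S (partialFill S.seed β S.w j 0)
  | 0, _ => partialFill_zero ▸ .seed
  | j + 1, hj => partialFill_row_end j ▸
      hβ.producible_partialFill_row hj (producible_partialFill hβ j (by omega)) S.w le_rfl

theorem producible (hβ : IsFilling S β) : Producible S β :=
  hβ.eq_partialFill ▸ hβ.producible_partialFill S.h le_rfl

theorem terminal (hβ : IsFilling S β) : Terminal S β := by
  refine ⟨hβ.producible, ?_⟩
  rintro _ ⟨t, x, y, hcan, -⟩
  obtain ⟨hx, hy⟩ := hcan.nonneg hβ.eq_seed
  obtain ⟨-, hnone, ⟨tw, hw, -⟩, ⟨ts, hs, -⟩⟩ := hcan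
  have hwest : y < S.h := by
    rcases eq_or_lt_of_le hx with rfl | hx
    · rw [hβ.eq_seed _ (.inl (by dsimp only; omega))] at hw
      exact (S.bounds_of_seed_isSome (by rw [hw]; rfl)).2.2.2
    · exact ((hβ.isSome_iff (x - 1) y (by omega) hy).mp (by rw [hw]; rfl)).2
  have hsouth : x < S.w := by
    rcases eq_or_lt_of_le hy with rfl | hy
    · rw [hβ.eq_seed _ (.inr (by dsimp only; omega))] at hs
      exact (S.bounds_of_seed_isSome (by rw [hs]; rfl)).2.1
    · exact ((hβ.isSome_iff x (y - 1) hx (by omega)).mp (by rw [hs]; rfl)).1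
  simpa [hnone] using (hβ.isSome_iff x y hx hy).mpr ⟨hsouth, hwest⟩

end IsFilling

def lSeed (w h : ℕ) (north east : ℤ → ℕ) (c : ℕ) : Assembly := fun p =>
  if p = (-1, -1) then some ⟨0, 0, 0, 0, c⟩
  else if 0 ≤ p.1 ∧ p.1 < w ∧ p.2 = -1 then some ⟨north p.1, 0, 0, 0, c⟩
  else if p.1 = -1 ∧ 0 ≤ p.2 ∧ p.2 < h then some ⟨0, 0, 0, east p.2, c⟩
  else none

section lSeed

variable {w h : ℕ} {north east : ℤ → ℕ} {c : ℕ}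

theorem lSeed_isSome_iff (p : ℤ × ℤ) :
    (lSeed w h north east c p).isSome ↔
      (p = (-1, -1) ∨ (0 ≤ p.1 ∧ p.1 < (w : ℤ) ∧ p.2 = -1) ∨
        (p.1 = -1 ∧ 0 ≤ p.2 ∧ p.2 < (h : ℤ))) := by
  obtain ⟨x, y⟩ := p
  unfold lSeed
  split_ifs <;> simp only [Prod.mk.injEq, Option.isSome_some, Option.isSome_none,
    Bool.false_eq_true, true_iff, false_iff] at * <;> omega

theorem color_of_lSeed_eq_some {p : ℤ × ℤ} {t : Tile} (hp : lSeed w h north east c p = some t) :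
    t.color = c := by
  unfold lSeed at hp
  split_ifs at hp <;> cases hp <;> rfl

theorem lSeed_apply_bottom {x : ℤ} (hx : 0 ≤ x) (hxw : x < w) :
    lSeed w h north east c (x, -1) = some ⟨north x, 0, 0, 0, c⟩ := by
  unfold lSeed
  rw [if_neg (by simp only [Prod.ext_iff]; omega), if_pos ⟨hx, hxw, rfl⟩]

theorem lSeed_apply_left {y : ℤ} (hy : 0 ≤ y) (hyh : y < h) :
    lSeed w h north east c (-1, y) = some ⟨0, 0, 0, east y, c⟩ := by
  unfold lSeed
  rw [if_neg (by simp only [Prod.ext_iff]; omega), if_neg (by omega), if_pos ⟨rfl, hy, hyh⟩]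

end lSeed

def freshColor (T : Finset Tile) : ℕ := T.sup Tile.color + 1

theorem color_ne_freshColor {T : Finset Tile} {t : Tile} (ht : t ∈ T) : t.color ≠ freshColor T :=
  (Nat.lt_succ_of_le (Finset.le_sup ht)).ne

def RTAS.ofGlues (T : Finset Tile) (w h : ℕ) (north east : ℤ → ℕ) : RTAS where
  T := T
  w := w
  h := h
  seed := lSeed w h north east (freshColor T)
  seed_dom := lSeed_isSome_iff
  seed_disjoint _ _ hp hT := color_ne_freshColor hT (color_of_lSeed_eq_some hp)

def window (γ σ : Assembly) (x₀ y₀ w h : ℕ) : Assembly := fun p =>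
  if 0 ≤ p.1 ∧ p.1 < w ∧ 0 ≤ p.2 ∧ p.2 < h then γ (x₀ + p.1, y₀ + p.2) else σ p

/-- Each seed tile presents the glue that the tile of the window next to it expects. -/
def windowRTAS (T : Finset Tile) (γ : Assembly) (x₀ y₀ w h : ℕ) : RTAS :=
  RTAS.ofGlues T w h (fun x => ((γ (x₀ + x, y₀)).map Tile.south).getD 0)
    (fun y => ((γ (x₀, y₀ + y)).map Tile.west).getD 0)

section window

variable {T : Finset Tile} {γ : Assembly} {x₀ y₀ w h : ℕ}

theorem window_apply_of_mem {σ : Assembly} {x y : ℤ} (hp : 0 ≤ x ∧ x < w ∧ 0 ≤ y ∧ y < h) :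
    window γ σ x₀ y₀ w h (x, y) = γ (x₀ + x, y₀ + y) :=
  if_pos hp

theorem window_apply_of_not_mem {σ : Assembly} {p : ℤ × ℤ}
    (hp : ¬(0 ≤ p.1 ∧ p.1 < w ∧ 0 ≤ p.2 ∧ p.2 < h)) : window γ σ x₀ y₀ w h p = σ p :=
  if_neg hp

theorem locallyConsistent_window (hγ : LocallyConsistent T γ) :
    LocallyConsistent T (window γ (windowRTAS T γ x₀ y₀ w h).seed x₀ y₀ w h) := by
  intro x y hx hy t ht
  by_cases hmem : x < w ∧ y < h
  swap
  · rw [window_apply_of_not_mem (by dsimp only; omega),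
      RTAS.seed_eq_none _ (p := (x, y)) hx hy] at ht
    cases ht
  rw [window_apply_of_mem (by omega)] at ht
  obtain ⟨hT, ⟨tw, hw, hwg⟩, ⟨ts, hs, hsg⟩⟩ := hγ _ _ (by omega) (by omega) t ht
  refine ⟨hT, ?_, ?_⟩
  · rcases eq_or_lt_of_le hx with rfl | hx
    · rw [window_apply_of_not_mem (by dsimp only; omega), zero_sub]
      dsimp only [windowRTAS, RTAS.ofGlues]
      rw [lSeed_apply_left hy hmem.2]
      rw [add_zero] at ht
      simp [ht]
    · refine ⟨tw, ?_, hwg⟩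
      rw [window_apply_of_mem (by omega), ← hw, add_sub_assoc]
  · rcases eq_or_lt_of_le hy with rfl | hy
    · rw [window_apply_of_not_mem (by dsimp only; omega), zero_sub]
      dsimp only [windowRTAS, RTAS.ofGlues]
      rw [lSeed_apply_bottom hx hmem.1]
      rw [add_zero] at ht
      simp [ht]
    · refine ⟨ts, ?_, hsg⟩
      rw [window_apply_of_mem (by omega), ← hs, add_sub_assoc]

theorem isFilling_window (hγ : LocallyConsistent T γ)
    (htiled : ∀ x y : ℤ, 0 ≤ x → x < w → 0 ≤ y → y < h → (γ (x₀ + x, y₀ + y)).isSome) :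
    IsFilling (windowRTAS T γ x₀ y₀ w h) (window γ (windowRTAS T γ x₀ y₀ w h).seed x₀ y₀ w h) where
  eq_seed _ hp := window_apply_of_not_mem (by omega)
  isSome_iff x y hx hy := by
    by_cases hmem : x < w ∧ y < h
    · rw [window_apply_of_mem (by omega)]
      exact iff_of_true (htiled x y hx hmem.1 hy hmem.2) hmem
    · rw [window_apply_of_not_mem (by dsimp only; omega), RTAS.seed_eq_none _ (p := (x, y)) hx hy]
      exact iff_of_false (by simp) hmem
  consistent := locallyConsistent_window hγ

end window

theorem subpattern_selfassembly_general (S : RTAS) (P : ℕ → ℕ → ℕ)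
    (hP : UniquelySelfAssembles S S.w S.h P)
    (x₀ y₀ w' h' : ℕ) (hw : x₀ + w' ≤ S.w) (hh : y₀ + h' ≤ S.h) :
    ∃ S' : RTAS, S'.T = S.T ∧ S'.w = w' ∧ S'.h = h' ∧
      UniquelySelfAssembles S' w' h' (fun x y => P (x₀ + x) (y₀ + y)) := by
  obtain ⟨γ, ⟨hγ, -⟩, hdom, hcol⟩ := hP
  set S' := windowRTAS S.T γ x₀ y₀ w' h'
  have hfill : IsFilling S' (window γ S'.seed x₀ y₀ w' h') := by
    refine isFilling_window hγ.locallyConsistent fun x y hx hxw hy hyh => ?_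
    lift x to ℕ using hx
    lift y to ℕ using hy
    exact_mod_cast (hdom (x₀ + x) (y₀ + y)).mpr (by omega)
  refine ⟨S', rfl, rfl, rfl, _, hfill.terminal, fun x y => ?_, fun x y t ht => ?_⟩
  · exact_mod_cast hfill.isSome_iff x y (by positivity) (by positivity)
  · have hmem : (x : ℤ) < w' ∧ (y : ℤ) < h' :=
      (hfill.isSome_iff x y (by positivity) (by positivity)).mp (by rw [ht]; rfl)
    rw [window_apply_of_mem (by omega)] at ht
    exact hcol _ _ t (by exact_mod_cast ht)

/-- If a directed RTAS uniquely self-assembles the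
`k`-coloured rectangular pattern `P` of width `w` and height `h`, then for any
rectangle `[x₀, x₀ + w') × [y₀, y₀ + h')` inside `[w] × [h]` (with
`w', h' ≥ 1`) there is an L-shaped seed such that the same tile set uniquely
self-assembles the corresponding subpattern of `P`. -/
theorem subpattern_selfassembly (S : RTAS) (hdir : DirectedTS S.T)
    (k : ℕ) (P : ℕ → ℕ → ℕ)
    (hPk : ∀ x y : ℕ, x < S.w → y < S.h → P x y < k)
    (hP : UniquelySelfAssembles S S.w S.h P)
    (x₀ y₀ w' h' : ℕ) (hw1 : 1 ≤ w') (hh1 : 1 ≤ h')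
    (hw : x₀ + w' ≤ S.w) (hh : y₀ + h' ≤ S.h) :
    ∃ S' : RTAS, S'.T = S.T ∧ S'.w = w' ∧ S'.h = h' ∧
      UniquelySelfAssembles S' w' h' (fun x y => P (x₀ + x) (y₀ + y)) :=
  subpattern_selfassembly_general S P hP x₀ y₀ w' h' hw hh
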